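/- Let Z and Y be real Banach spaces and let T : Z → Y be a continuous linear operator. Then the range T(Z) contains a subspace isomorphic to c₀₀ (the normed space of finitely supported real sequences with the sup norm) if and only if the closure of T(Z) in Y contains a subspace isomorphic to c₀ (the Banach space of real sequences converging to 0 with the sup norm). Here 'contains a subspace isomorphic to' means there exists a continuous linear map from the sequence space into the given set's span which is an isomorphism onto its image and whose image lies in the given set. -/

import Mathlib

open scoped ZeroAtInfty

/-- `c₀₀`: the subspace of `c₀ = C₀(ℕ, ℝ)` consisting of finitely supported real
sequences, equipped with the supremum norm (inherited from `C₀(ℕ, ℝ)`). -/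
noncomputable def cZeroZero : Submodule ℝ C₀(ℕ, ℝ) where
  carrier := {f | (Function.support (f : ℕ → ℝ)).Finite}
  add_mem' := fun hf hg => Set.Finite.subset (hf.union hg) (Function.support_add _ _)
  zero_mem' := by simp [Function.support]
  smul_mem' := fun c f hf => Set.Finite.subset hf (Function.support_const_smul_subset c _)

/-!
Since `c₀₀` is dense in `c₀`, an embedding of `c₀₀` extends by continuity to an embedding of `c₀`
with the same lower bound, and its range lies in the closure of the original range.

Conversely, let `J : c₀ → Y` satisfy `c ‖f‖ ≤ ‖J f‖` with range in the closure of `range T`.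
Approximate each `J eₙ` by some `yₙ ∈ range T` up to `c / 2 ^ (n + 2)`. On `c₀₀` the map
`f ↦ ∑ fₙ yₙ` takes values in `range T` and differs from `J f = ∑ fₙ J eₙ` by at most
`(∑ₙ c / 2 ^ (n + 2)) ‖f‖ = c / 2 ‖f‖`, so it is an embedding with lower bound `c / 2`.
-/

open Filter Topology

namespace ZeroAtInftyContinuousMap

variable {α β : Type*} [TopologicalSpace α] [NormedAddCommGroup β]

lemma norm_apply_le (f : C₀(α, β)) (x : α) : ‖f x‖ ≤ ‖f‖ :=
  f.toBCF.norm_coe_le_norm x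

lemma norm_le_of_forall_le {f : C₀(α, β)} {M : ℝ} (hM : 0 ≤ M) (h : ∀ x, ‖f x‖ ≤ M) :
    ‖f‖ ≤ M :=
  (BoundedContinuousFunction.norm_le hM).mpr h

lemma sum_apply {ι : Type*} (s : Finset ι) (f : ι → C₀(α, β)) (x : α) :
    (∑ i ∈ s, f i) x = ∑ i ∈ s, f i x :=
  map_sum (⟨⟨fun g : C₀(α, β) => g x, rfl⟩, fun _ _ => rfl⟩ : C₀(α, β) →+ β) f s

end ZeroAtInftyContinuousMap

noncomputable def c0Single (n : ℕ) : C₀(ℕ, ℝ) where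
  toFun := Pi.single n 1
  continuous_toFun := continuous_of_discreteTopology
  zero_at_infty' := HasCompactSupport.is_zero_at_infty <|
    ((Set.finite_singleton n).subset Pi.support_single_subset).isCompact.closure

lemma c0Single_apply (n m : ℕ) : c0Single n m = if m = n then 1 else 0 :=
  Pi.single_apply n 1 m

lemma sum_smul_c0Single_apply (s : Finset ℕ) (f : C₀(ℕ, ℝ)) (m : ℕ) :
    (∑ n ∈ s, f n • c0Single n) m = if m ∈ s then f m else 0 := by
  simp [ZeroAtInftyContinuousMap.sum_apply, c0Single_apply]

lemma tendsto_sum_range_smul_c0Single (f : C₀(ℕ, ℝ)) :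
    Tendsto (fun N => ∑ n ∈ Finset.range N, f n • c0Single n) atTop (𝓝 f) := by
  have hf : Tendsto f atTop (𝓝 0) := by
    simpa [cocompact_eq_cofinite, Nat.cofinite_eq_atTop] using f.zero_at_infty'
  refine Metric.tendsto_atTop.mpr fun ε hε => ?_
  obtain ⟨N, hN⟩ := Metric.tendsto_atTop.mp hf (ε / 2) (half_pos hε)
  refine ⟨N, fun k hk => (dist_eq_norm _ _).trans_lt ?_⟩
  refine lt_of_le_of_lt ?_ (half_lt_self hε)
  refine ZeroAtInftyContinuousMap.norm_le_of_forall_le (half_pos hε).le fun m => ?_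
  rw [ZeroAtInftyContinuousMap.sub_apply, sum_smul_c0Single_apply]
  split_ifs with hm
  · simp [(half_pos hε).le]
  · simpa using (hN m (hk.trans (not_lt.mp (Finset.mem_range.not.mp hm)))).le

namespace cZeroZero

lemma c0Single_mem (n : ℕ) : c0Single n ∈ cZeroZero :=
  (Set.finite_singleton n).subset Pi.support_single_subset

lemma dense : Dense (cZeroZero : Set C₀(ℕ, ℝ)) := fun f =>
  mem_closure_of_tendsto (tendsto_sum_range_smul_c0Single f) <| Eventually.of_forall fun _ =>
    Submodule.sum_mem _ fun n _ => Submodule.smul_mem _ _ (c0Single_mem n)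

lemma support_finite (f : cZeroZero) : (Function.support (f : ℕ → ℝ)).Finite := f.2

noncomputable def toFinsupp : cZeroZero →ₗ[ℝ] ℕ →₀ ℝ where
  toFun f := Finsupp.ofSupportFinite f (support_finite f)
  map_add' _ _ := Finsupp.ext fun _ => rfl
  map_smul' _ _ := Finsupp.ext fun _ => rfl

variable {E : Type*} [AddCommGroup E] [Module ℝ E]

noncomputable def linearCombination (v : ℕ → E) : cZeroZero →ₗ[ℝ] E :=
  Finsupp.linearCombination ℝ v ∘ₗ toFinsupp

lemma linearCombination_apply (v : ℕ → E) (f : cZeroZero) :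
    linearCombination v f = ∑ n ∈ (support_finite f).toFinset, (f : C₀(ℕ, ℝ)) n • v n := by
  rw [linearCombination, LinearMap.comp_apply, Finsupp.linearCombination_apply, Finsupp.sum,
    toFinsupp, LinearMap.coe_mk, AddHom.coe_mk, Finsupp.ofSupportFinite_support]
  rfl

lemma linearCombination_c0Single (f : cZeroZero) :
    linearCombination c0Single f = f := by
  ext m
  rw [linearCombination_apply, sum_smul_c0Single_apply, ite_eq_left_iff, Set.Finite.mem_toFinset,
    Function.mem_support, not_not]
  exact Eq.symm

lemma map_linearCombination {F : Type*} [AddCommGroup F] [Module ℝ F] (L : E →ₗ[ℝ] F)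
    (v : ℕ → E) (f : cZeroZero) :
    L (linearCombination v f) = linearCombination (L ∘ v) f :=
  Finsupp.apply_linearCombination ℝ L v _

lemma linearCombination_sub (v w : ℕ → E) (f : cZeroZero) :
    linearCombination (v - w) f = linearCombination v f - linearCombination w f := by
  simp only [linearCombination_apply, Pi.sub_apply, smul_sub, Finset.sum_sub_distrib]

lemma linearCombination_mem {M : Submodule ℝ E} {v : ℕ → E} (hv : ∀ n, v n ∈ M)
    (f : cZeroZero) : linearCombination v f ∈ M := by
  rw [linearCombination_apply]
  exact M.sum_mem fun n _ => M.smul_mem _ (hv n)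

lemma norm_linearCombination_le {E : Type*} [SeminormedAddCommGroup E] [NormedSpace ℝ E]
    {v : ℕ → E} (hv : Summable fun n => ‖v n‖) (f : cZeroZero) :
    ‖linearCombination v f‖ ≤ (∑' n, ‖v n‖) * ‖f‖ := by
  set s := (support_finite f).toFinset
  calc ‖linearCombination v f‖ ≤ ∑ n ∈ s, ‖(f : C₀(ℕ, ℝ)) n‖ * ‖v n‖ := by
        rw [linearCombination_apply]
        exact norm_sum_le_of_le _ fun n _ => norm_smul_le _ _
    _ ≤ ∑ n ∈ s, ‖f‖ * ‖v n‖ := by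
        gcongr with n
        exact ZeroAtInftyContinuousMap.norm_apply_le _ n
    _ ≤ ‖f‖ * ∑' n, ‖v n‖ := by
        rw [← Finset.mul_sum]
        gcongr
        exact hv.sum_le_tsum s fun n _ => norm_nonneg _
    _ = (∑' n, ‖v n‖) * ‖f‖ := mul_comm _ _

end cZeroZero

lemma Submodule.exists_extension_bounded_below_of_dense {𝕜 E F : Type*}
    [NontriviallyNormedField 𝕜] [NormedAddCommGroup E] [NormedSpace 𝕜 E] [NormedAddCommGroup F]
    [NormedSpace 𝕜 F] [CompleteSpace F] {S : Submodule 𝕜 E} (hS : Dense (S : Set E))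
    (J : S →L[𝕜] F) {c : ℝ} (hJ : ∀ x, c * ‖x‖ ≤ ‖J x‖) :
    ∃ J' : E →L[𝕜] F, (∀ x, c * ‖x‖ ≤ ‖J' x‖) ∧ Set.range J' ⊆ closure (Set.range J) := by
  set J' := J.extend S.subtypeL
  have hJ' (x : S) : J' x = J x :=
    J.extend_eq hS.denseRange_val isometry_subtype_coe.isUniformInducing x
  refine ⟨J', fun x => ?_, ?_⟩
  · exact hS.denseRange_val.induction_on x
      (isClosed_le (continuous_const.mul continuous_norm) J'.continuous.norm)
      fun y => (hJ' y).symm ▸ hJ y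
  · rintro _ ⟨x, rfl⟩
    exact hS.denseRange_val.induction_on x (isClosed_closure.preimage J'.continuous)
      fun y => (hJ' y).symm ▸ subset_closure (Set.mem_range_self y)

theorem exists_c00_bounded_below_of_range_subset_closure {Y : Type*} [NormedAddCommGroup Y]
    [NormedSpace ℝ Y] (J : C₀(ℕ, ℝ) →L[ℝ] Y) {c : ℝ} (hc : 0 < c)
    (hJ : ∀ f, c * ‖f‖ ≤ ‖J f‖) (M : Submodule ℝ Y) (hJM : Set.range J ⊆ closure M) :
    ∃ J' : cZeroZero →L[ℝ] Y, (∀ f, c / 2 * ‖f‖ ≤ ‖J' f‖) ∧ Set.range J' ⊆ M := by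
  have hy (n : ℕ) : ∃ y ∈ M, ‖y - J (c0Single n)‖ ≤ c / 2 / 2 / 2 ^ n := by
    obtain ⟨y, hyM, hy⟩ := Metric.mem_closure_iff.mp (hJM (Set.mem_range_self (c0Single n)))
      (c / 2 / 2 / 2 ^ n) (by positivity)
    exact ⟨y, hyM, by rw [← dist_eq_norm, dist_comm]; exact hy.le⟩
  choose y hyM hy using hy
  set L := cZeroZero.linearCombination y
  have hLJ (f : cZeroZero) : ‖L f - J f‖ ≤ c / 2 * ‖f‖ := by
    have hsum : Summable fun n => ‖(y - J ∘ c0Single) n‖ :=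
      (summable_geometric_two' (c / 2)).of_nonneg_of_le (fun _ => norm_nonneg _) hy
    calc ‖L f - J f‖ = ‖cZeroZero.linearCombination (y - J ∘ c0Single) f‖ := by
          rw [cZeroZero.linearCombination_sub, ← ContinuousLinearMap.coe_coe J,
            ← cZeroZero.map_linearCombination, cZeroZero.linearCombination_c0Single]
      _ ≤ (∑' n, ‖(y - J ∘ c0Single) n‖) * ‖f‖ := cZeroZero.norm_linearCombination_le hsum f
      _ ≤ c / 2 * ‖f‖ := by
          gcongr
          exact (tsum_geometric_two' (c / 2)) ▸
            hsum.tsum_le_tsum hy (summable_geometric_two' (c / 2))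
  have hL (f : cZeroZero) : ‖L f‖ ≤ (‖J‖ + c / 2) * ‖f‖ :=
    calc ‖L f‖ ≤ ‖J f‖ + ‖L f - J f‖ := norm_le_insert' _ _
      _ ≤ ‖J‖ * ‖f‖ + c / 2 * ‖f‖ := add_le_add (J.le_opNorm f) (hLJ f)
      _ = (‖J‖ + c / 2) * ‖f‖ := by ring
  refine ⟨L.mkContinuous (E := cZeroZero) _ hL, fun f => ?_, ?_⟩
  · have hJf : c * ‖f‖ ≤ ‖J f‖ := hJ f
    have hJL : ‖J f‖ ≤ ‖L f‖ + ‖L f - J f‖ := norm_le_insert _ _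
    rw [LinearMap.mkContinuous_apply]
    linarith [hLJ f]
  · rintro _ ⟨f, rfl⟩
    exact cZeroZero.linearCombination_mem hyM f

theorem c00_in_range_iff_c0_in_closure_range_general
    (Z Y : Type*) [NormedAddCommGroup Z] [NormedSpace ℝ Z]
    [NormedAddCommGroup Y] [NormedSpace ℝ Y] [CompleteSpace Y]
    (T : Z →L[ℝ] Y) :
    (∃ J : cZeroZero →L[ℝ] Y,
        (∃ c > 0, ∀ f : cZeroZero, c * ‖f‖ ≤ ‖J f‖) ∧
        Set.range J ⊆ Set.range T) ↔
    (∃ J : C₀(ℕ, ℝ) →L[ℝ] Y,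
        (∃ c > 0, ∀ f : C₀(ℕ, ℝ), c * ‖f‖ ≤ ‖J f‖) ∧
        Set.range J ⊆ closure (Set.range T)) := by
  constructor
  · rintro ⟨J, ⟨c, hc, hJ⟩, hJT⟩
    obtain ⟨J', hJ', hJ'J⟩ :=
      Submodule.exists_extension_bounded_below_of_dense cZeroZero.dense J hJ
    exact ⟨J', ⟨c, hc, hJ'⟩, hJ'J.trans (closure_mono hJT)⟩
  · rintro ⟨J, ⟨c, hc, hJ⟩, hJT⟩
    obtain ⟨J', hJ', hJ'T⟩ := exists_c00_bounded_below_of_range_subset_closure J hc hJ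
      (T : Z →ₗ[ℝ] Y).range hJT
    exact ⟨J', ⟨c / 2, half_pos hc, hJ'⟩, hJ'T⟩

/-- For a continuous linear operator `T : Z → Y` between real Banach spaces, the range
of `T` contains an isomorphic copy of `c₀₀` (finitely supported real sequences, sup
norm) if and only if the closure of the range of `T` contains an isomorphic copy of
`c₀`. -/
theorem c00_in_range_iff_c0_in_closure_range
    (Z Y : Type*) [NormedAddCommGroup Z] [NormedSpace ℝ Z] [CompleteSpace Z]
    [NormedAddCommGroup Y] [NormedSpace ℝ Y] [CompleteSpace Y]
    (T : Z →L[ℝ] Y) :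
    (∃ J : cZeroZero →L[ℝ] Y,
        (∃ c > 0, ∀ f : cZeroZero, c * ‖f‖ ≤ ‖J f‖) ∧
        Set.range J ⊆ Set.range T) ↔
    (∃ J : C₀(ℕ, ℝ) →L[ℝ] Y,
        (∃ c > 0, ∀ f : C₀(ℕ, ℝ), c * ‖f‖ ≤ ‖J f‖) ∧
        Set.range J ⊆ closure (Set.range T)) :=
  c00_in_range_iff_c0_in_closure_range_general Z Y T
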